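/- arXiv:math/0601733 — 5 statements merged into one kernel-verified Lean document; each statement's English description precedes it below -/
import Mathlib

section
/- Let Φ(x,y) ∈ ℂ[x,y] have degree d ≥ 1 in y, fix u₀ ∈ ℂ, and suppose Φ(u₀,y) has d pairwise distinct roots u₁,…,u_d ∈ ℂ (with leading y-coefficient nonvanishing at u₀ so that deg_y Φ(u₀,y) = d). Let Φ₀, Φ₁, …, Φ_{d-1} be the iterated divided differences of Φ in the second variable as defined by Φ₀(x₀;x₁) = Φ(x₀,x₁) and Φ_{ℓ-1}(x₀;x₁,…,x_ℓ) = (Φ_{ℓ-2}(x₀;x₁,…,x_{ℓ-1}) − Φ_{ℓ-2}(x₀;x₁,…,x_{ℓ-2},x_ℓ))/(x_ℓ − x_{ℓ-1}). Then the set of solutions (x₁,…,x_d) ∈ ℂ^d of the system Φ₀(u₀;x₁) = 0, Φ₁(u₀;x₁,x₂) = 0, …, Φ_{d-1}(u₀;x₁,…,x_d) = 0 is exactly the set of all d! tuples (u_{σ(1)},…,u_{σ(d)}) for permutations σ of {1,…,d}. -/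
namespace DDaux
variable {R : Type*} [CommRing R]

def hfun : ℕ → List R → R
  | 0, [] => 1
  | _+1, [] => 0
  | j, (a :: l) => ∑ i ∈ Finset.range (j+1), a^i * hfun (j - i) l

@[simp] lemma hfun_nil_succ (j : ℕ) : hfun (j+1) ([] : List R) = 0 := rfl

lemma hfun_cons (j : ℕ) (a : R) (l : List R) :
    hfun j (a :: l) = ∑ i ∈ Finset.range (j+1), a^i * hfun (j - i) l := by
  cases j <;> rfl

@[simp] lemma hfun_zero (l : List R) : hfun 0 l = 1 := by
  induction l with
  | nil => rfl
  | cons a l ih => rw [hfun_cons]; simp [ih]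

lemma hfun_cons_succ (j : ℕ) (a : R) (l : List R) :
    hfun (j+1) (a :: l) = hfun (j+1) l + a * hfun j (a :: l) := by
  rw [hfun_cons, Finset.sum_range_succ' (fun i => a^i * hfun (j+1-i) l)]
  rw [hfun_cons, Finset.mul_sum]
  simp only [pow_zero, one_mul, Nat.sub_zero, pow_succ]
  rw [add_comm]
  congr 1
  apply Finset.sum_congr rfl
  intro i hi
  have : j + 1 - (i + 1) = j - i := by omega
  rw [this]; ring

/-- L6 -/
lemma hfun_strip (j : ℕ) (a : R) (l : List R) :
    hfun (j+1) (a :: l) - a * hfun j (a :: l) = hfun (j+1) l := by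
  rw [hfun_cons_succ]; ring

/-- L5: difference identity -/
lemma hfun_diff (j : ℕ) (a b : R) (l : List R) :
    hfun (j+1) (a :: l) - hfun (j+1) (b :: l) = (a - b) * hfun j (a :: b :: l) := by
  induction j with
  | zero =>
    rw [hfun_cons_succ, hfun_cons_succ]
    simp [mul_comm]
  | succ j ih =>
    rw [hfun_cons_succ (j+1) a l, hfun_cons_succ (j+1) b l]
    have : hfun (j+2) l + a * hfun (j+1) (a :: l) - (hfun (j+2) l + b * hfun (j+1) (b :: l))
        = a * (hfun (j+1) (a::l) - hfun (j+1) (b::l)) + (a - b) * hfun (j+1) (b :: l) := by ring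
    rw [this, ih, hfun_cons_succ j a (b :: l)]
    ring

/-- L4: swap -/
lemma hfun_swap (j : ℕ) (a b : R) (l : List R) :
    hfun j (a :: b :: l) = hfun j (b :: a :: l) := by
  induction j with
  | zero => simp
  | succ j ih =>
    rw [hfun_cons_succ j a (b::l), hfun_cons_succ j b (a::l)]
    linear_combination hfun_diff j b a l + a * ih

lemma hfun_perm {l l' : List R} (h : l.Perm l') (j : ℕ) : hfun j l = hfun j l' := by
  induction h generalizing j with
  | nil => rfl
  | cons a _ ih =>
    rw [hfun_cons, hfun_cons]
    exact Finset.sum_congr rfl fun i _ => by rw [ih]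
  | swap a b l => exact hfun_swap j b a l
  | trans _ _ ih1 ih2 => rw [ih1, ih2]

@[simp] lemma hfun_singleton (j : ℕ) (a : R) : hfun j [a] = a ^ j := by
  induction j with
  | zero => simp
  | succ j ih => rw [hfun_cons_succ]; simp [ih, pow_succ, mul_comm]

lemma hfun_map {S : Type*} [CommRing S] (f : R →+* S) (j : ℕ) (l : List R) :
    f (hfun j l) = hfun j (l.map f) := by
  induction l generalizing j with
  | nil => cases j <;> simp
  | cons a l ih =>
    rw [hfun_cons, List.map_cons, hfun_cons]
    simp only [map_sum, map_mul, map_pow, ih]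


open Polynomial in
noncomputable def DpFun (p : R[X]) (k : ℕ) (t : List R) : R :=
  p.sum fun n c => c * if k ≤ n then hfun (n - k) t else 0

open Polynomial

lemma DpFun_add (p q : R[X]) (k : ℕ) (t : List R) :
    DpFun (p + q) k t = DpFun p k t + DpFun q k t := by
  unfold DpFun
  apply Polynomial.sum_add_index <;> intros <;> split <;> simp [add_mul]

lemma DpFun_neg (p : R[X]) (k : ℕ) (t : List R) :
    DpFun (-p) k t = -DpFun p k t := by
  unfold DpFun
  simp only [Polynomial.sum_def, Polynomial.support_neg, Polynomial.coeff_neg, neg_mul]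
  rw [← Finset.sum_neg_distrib]

lemma DpFun_sub (p q : R[X]) (k : ℕ) (t : List R) :
    DpFun (p - q) k t = DpFun p k t - DpFun q k t := by
  rw [sub_eq_add_neg, DpFun_add, DpFun_neg, sub_eq_add_neg]

lemma DpFun_monomial (n : ℕ) (a : R) (k : ℕ) (t : List R) :
    DpFun (monomial n a) k t = a * if k ≤ n then hfun (n - k) t else 0 := by
  unfold DpFun
  apply Polynomial.sum_monomial_index
  simp

lemma DpFun_eval (p : R[X]) (z : R) : DpFun p 0 [z] = p.eval z := by
  unfold DpFun
  rw [Polynomial.eval_eq_sum]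
  simp [Polynomial.sum_def]

lemma DpFun_strip (v : R) (q : R[X]) (k : ℕ) (t : List R) :
    DpFun ((X - C v) * q) (k+1) (v :: t) = DpFun q k t := by
  induction q using Polynomial.induction_on' with
  | add p q hp hq => rw [mul_add, DpFun_add, DpFun_add, hp, hq]
  | monomial n a =>
    have h : (X - C v) * monomial n a = monomial (n+1) a - monomial n (v*a) := by
      rw [sub_mul, X_mul_monomial, C_mul_monomial]
    rw [h, DpFun_sub, DpFun_monomial, DpFun_monomial, DpFun_monomial]
    rcases lt_or_ge n k with hn | hn
    · simp [Nat.not_le.mpr hn, Nat.not_le.mpr (Nat.lt_succ_of_lt hn),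
        Nat.not_le.mpr (Nat.succ_lt_succ hn)]
    · rcases eq_or_lt_of_le hn with rfl | hn'
      · simp [Nat.not_succ_le_self, Nat.le_refl]
      · obtain ⟨m, hm⟩ : ∃ m, n - k = m + 1 := ⟨n - k - 1, by omega⟩
        have h1 : k + 1 ≤ n + 1 := by omega
        have h2 : k + 1 ≤ n := by omega
        have h3 : n + 1 - (k+1) = m + 1 := by omega
        have h4 : n - (k+1) = m := by omega
        simp only [if_pos h1, if_pos h2, if_pos hn, hm, h3, h4]
        linear_combination a * hfun_strip m v t


lemma DpFun_diff (p : R[X]) (k : ℕ) (l : List R) (a b : R) :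
    DpFun p k (l ++ [a]) - DpFun p k (l ++ [b]) = (a - b) * DpFun p (k+1) (l ++ [a, b]) := by
  unfold DpFun
  rw [Polynomial.sum_def, Polynomial.sum_def, Polynomial.sum_def,
    ← Finset.sum_sub_distrib, Finset.mul_sum]
  refine Finset.sum_congr rfl fun n _ => ?_
  rcases lt_or_ge n k with hn | hn
  · rw [if_neg (by omega), if_neg (by omega), if_neg (by omega)]
    ring
  · rcases eq_or_lt_of_le hn with rfl | hn'
    · rw [if_pos le_rfl, if_pos le_rfl, if_neg (by omega), Nat.sub_self, hfun_zero, hfun_zero]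
      ring
    · obtain ⟨m, hm⟩ : ∃ m, n - k = m + 1 := ⟨n - k - 1, by omega⟩
      rw [if_pos hn, if_pos hn, if_pos (by omega : k + 1 ≤ n), hm,
        (by omega : n - (k+1) = m)]
      rw [hfun_perm (List.perm_append_singleton a l) (m+1),
        hfun_perm (List.perm_append_singleton b l) (m+1),
        hfun_perm (List.perm_append_comm (l₁ := l) (l₂ := [a,b])) m]
      have hab : ([a, b] ++ l) = a :: b :: l := rfl
      rw [hab]
      linear_combination p.coeff n * hfun_diff m a b l

noncomputable def Dmv (p : R[X]) (k m : ℕ) : MvPolynomial (Fin m) R :=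
  p.sum fun n c => MvPolynomial.C c *
    if k ≤ n then hfun (n - k) (List.ofFn (MvPolynomial.X (R := R))) else 0

lemma eval_Dmv (p : R[X]) (k m : ℕ) (t : Fin m → R) :
    MvPolynomial.eval t (Dmv p k m) = DpFun p k (List.ofFn t) := by
  unfold Dmv DpFun
  rw [Polynomial.sum_def, Polynomial.sum_def, map_sum]
  refine Finset.sum_congr rfl fun n _ => ?_
  rw [map_mul, MvPolynomial.eval_C]
  congr 1
  split_ifs with h
  · rw [hfun_map (MvPolynomial.eval t), List.map_ofFn]
    simp [Function.comp_def]
  · exact map_zero _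

end DDaux


open MvPolynomial DDaux

/-- The iterated divided differences separate the `d` distinct roots of
`Φ(u₀,y)`: the solutions of the system `Φ_{ℓ-1}(u₀;x₁,…,x_ℓ) = 0`, `1 ≤ ℓ ≤ d`,
are exactly the permutations of the roots. Here `Φ : ℂ[x][y]` (outer variable
`y`), `Q k` is the `k`-th divided difference in variables `x₀,x₁,…,x_{k+1}`. -/
theorem stmt_6 (Φ : Polynomial (Polynomial ℂ)) (d : ℕ) (hd : 1 ≤ d)
    (hdeg : Φ.natDegree = d) (u₀ : ℂ)
    (hlead : Φ.leadingCoeff.eval u₀ ≠ 0)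
    (u : Fin d → ℂ) (huinj : Function.Injective u)
    (hroots : ∀ i, (Φ.map (Polynomial.evalRingHom u₀)).eval (u i) = 0)
    (Q : (k : ℕ) → MvPolynomial (Fin (k + 2)) ℂ)
    (hbase : ∀ x : Fin 2 → ℂ,
      eval x (Q 0) = (Φ.map (Polynomial.evalRingHom (x 0))).eval (x 1))
    (hrec : ∀ (k : ℕ) (x : Fin (k + 3) → ℂ),
      eval x (Q (k + 1)) * (x ⟨k + 2, by omega⟩ - x ⟨k + 1, by omega⟩)
        = eval (fun i : Fin (k + 2) => x i.castSucc) (Q k)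
          - eval (fun i : Fin (k + 2) =>
              if (i : ℕ) = k + 1 then x ⟨k + 2, by omega⟩ else x i.castSucc) (Q k)) :
    ∀ x : Fin d → ℂ,
      (∀ (k : ℕ) (hk : k < d),
        eval (fun i : Fin (k + 2) =>
          if (i : ℕ) = 0 then u₀ else x ⟨(i : ℕ) - 1, by have := i.isLt; omega⟩) (Q k) = 0)
      ↔ ∃ σ : Equiv.Perm (Fin d), ∀ i, x i = u (σ i) := by
  classical
  intro x
  set p : Polynomial ℂ := Φ.map (Polynomial.evalRingHom u₀) with hpdef
  have hlead' : (Polynomial.evalRingHom u₀) Φ.leadingCoeff ≠ 0 := hlead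
  have hpdeg : p.natDegree = d := by
    rw [hpdef, Polynomial.natDegree_map_of_leadingCoeff_ne_zero _ hlead', hdeg]
  have hc : p.coeff d ≠ 0 := by
    rw [hpdef, Polynomial.coeff_map]
    have h : Φ.coeff d = Φ.leadingCoeff := by rw [Polynomial.leadingCoeff, hdeg]
    rw [h]; exact hlead
  set c : ℂ := p.coeff d with hcdef
  set P1 : Polynomial ℂ := ∏ i : Fin d, (Polynomial.X - Polynomial.C (u i)) with hP1
  have hP1monic : P1.Monic :=
    Polynomial.monic_prod_of_monic _ _ fun i _ => Polynomial.monic_X_sub_C _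
  have hP1deg : P1.natDegree = d := by
    rw [hP1, Polynomial.natDegree_prod_of_monic _ _ fun i _ => Polynomial.monic_X_sub_C _]
    simp
  have hfact : p = Polynomial.C c * P1 := by
    have hr0 : p - Polynomial.C c * P1 = 0 := by
      set r := p - Polynomial.C c * P1 with hr
      by_cases hrz : r = 0
      · exact hrz
      have hcoeff : ∀ n : ℕ, d ≤ n → r.coeff n = 0 := by
        intro n hn
        by_cases hnd : n = d
        · subst hnd
          have h1 : P1.coeff n = 1 := by
            have := hP1monic.coeff_natDegree
            rwa [hP1deg] at this
          simp [hr, Polynomial.coeff_sub, Polynomial.coeff_C_mul, h1, ← hcdef]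
        · have h1 : P1.coeff n = 0 :=
            Polynomial.coeff_eq_zero_of_natDegree_lt (by omega)
          have h2 : p.coeff n = 0 :=
            Polynomial.coeff_eq_zero_of_natDegree_lt (by omega)
          simp [hr, Polynomial.coeff_sub, Polynomial.coeff_C_mul, h1, h2]
      apply Polynomial.eq_zero_of_natDegree_lt_card_of_eval_eq_zero r huinj
      · intro i
        have h1 : P1.eval (u i) = 0 := by
          rw [hP1, Polynomial.eval_prod]
          exact Finset.prod_eq_zero (Finset.mem_univ i) (by simp)
        simp [hr, Polynomial.eval_sub, hroots i, h1, ← hpdef]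
      · rw [Fintype.card_fin]
        rw [Polynomial.natDegree_lt_iff_degree_lt hrz]
        rw [Polynomial.degree_lt_iff_coeff_zero]
        intro m hm
        exact hcoeff m (by exact_mod_cast hm)
    exact sub_eq_zero.mp hr0
  have hcne : c ≠ 0 := hc
  set qS : Finset (Fin d) → Polynomial ℂ :=
    fun S => Polynomial.C c * ∏ i ∈ S, (Polynomial.X - Polynomial.C (u i)) with hqS
  have hq_univ : qS Finset.univ = p := by rw [hqS]; exact hfact.symm
  have hq_strip : ∀ (S : Finset (Fin d)) (i : Fin d), i ∈ S →
      qS S = (Polynomial.X - Polynomial.C (u i)) * qS (S.erase i) := by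
    intro S i hi
    simp only [hqS]
    rw [← Finset.mul_prod_erase S _ hi]
    ring
  have hq_zero : ∀ (S : Finset (Fin d)) (z : ℂ), (qS S).eval z = 0 ↔ ∃ i ∈ S, z = u i := by
    intro S z
    have he : (qS S).eval z = c * ∏ i ∈ S, (z - u i) := by
      simp [hqS, Polynomial.eval_prod]
    rw [he, mul_eq_zero, or_iff_right hcne, Finset.prod_eq_zero_iff]
    constructor
    · rintro ⟨i, hi, h⟩; exact ⟨i, hi, (sub_eq_zero.mp h).symm ▸ rfl⟩
    · rintro ⟨i, hi, rfl⟩; exact ⟨i, hi, sub_self _⟩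
  have chain : ∀ (k : ℕ) (S : Finset (Fin d)) (f : Fin k → Fin d),
      Function.Injective f → (∀ j, f j ∈ S) → ∀ t : List ℂ,
      DpFun (qS S) k (List.ofFn (fun j => u (f j)) ++ t)
        = DpFun (qS (S \ Finset.image f Finset.univ)) 0 t := by
    intro k
    induction k with
    | zero =>
      intro S f _ _ t
      have h2 : S \ Finset.image f Finset.univ = S := by simp
      rw [List.ofFn_zero, h2, List.nil_append]
    | succ k ih =>
      intro S f hfinj hfS t
      rw [List.ofFn_succ, hq_strip S (f 0) (hfS 0), List.cons_append, DpFun_strip]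
      have hsubinj : Function.Injective (fun j : Fin k => f j.succ) :=
        fun a b h => Fin.succ_injective _ (hfinj h)
      have hmem : ∀ j : Fin k, f j.succ ∈ S.erase (f 0) := by
        intro j
        exact Finset.mem_erase.mpr ⟨fun h => (Fin.succ_ne_zero j) (hfinj h), hfS _⟩
      rw [ih (S.erase (f 0)) _ hsubinj hmem t]
      congr 2
      ext i
      simp only [Finset.mem_sdiff, Finset.mem_erase, Finset.mem_image, Finset.mem_univ,
        true_and, Fin.exists_fin_succ, ne_eq, not_or, not_exists]
      constructor
      · rintro ⟨⟨hne, hiS⟩, hnotim⟩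
        exact ⟨hiS, fun h => hne h.symm, hnotim⟩
      · rintro ⟨hiS, h0, hs⟩
        exact ⟨⟨fun h => h0 h.symm, hiS⟩, hs⟩
  have hQ' : ∀ (k : ℕ) (t : Fin (k+1) → ℂ),
      MvPolynomial.eval t
        (MvPolynomial.aeval (Fin.cases (MvPolynomial.C u₀) MvPolynomial.X) (Q k))
        = MvPolynomial.eval (Fin.cases u₀ t) (Q k) := by
    intro k t
    rw [MvPolynomial.aeval_def, MvPolynomial.eval_eval₂]
    have h1 : ((MvPolynomial.eval t).comp (algebraMap ℂ (MvPolynomial (Fin (k+1)) ℂ)))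
        = RingHom.id ℂ := by
      ext r; simp
    rw [h1, MvPolynomial.eval₂_id]
    have hpt : (fun s : Fin (k+2) => MvPolynomial.eval t
        (Fin.cases (motive := fun _ => MvPolynomial (Fin (k+1)) ℂ)
          (MvPolynomial.C u₀) MvPolynomial.X s))
        = Fin.cases (motive := fun _ => ℂ) u₀ t := by
      funext i
      induction i using Fin.cases with
      | zero => simp
      | succ j => simp
    exact congrArg (fun g : Fin (k+2) → ℂ => MvPolynomial.eval g (Q k)) hpt
  have key : ∀ (k : ℕ),
      MvPolynomial.aeval (Fin.cases (MvPolynomial.C u₀) MvPolynomial.X) (Q k)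
        = (-1 : MvPolynomial (Fin (k+1)) ℂ) ^ k * Dmv p k (k+1) := by
    intro k
    induction k with
    | zero =>
      apply MvPolynomial.funext
      intro t
      rw [hQ' 0 t, hbase (Fin.cases u₀ t), map_mul, map_pow, map_neg, map_one, eval_Dmv]
      have h0 : Fin.cases (motive := fun _ => ℂ) u₀ t 0 = u₀ := rfl
      have h1 : Fin.cases (motive := fun _ => ℂ) u₀ t 1 = t 0 := rfl
      rw [h0, h1]
      have hl : List.ofFn t = [t 0] := by simp [List.ofFn_succ]
      rw [hl, DpFun_eval, pow_zero, one_mul, ← hpdef]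
    | succ k ihk =>
      have hXne : (MvPolynomial.X ⟨k+1, by omega⟩ - MvPolynomial.X ⟨k, by omega⟩ :
          MvPolynomial (Fin (k+2)) ℂ) ≠ 0 := by
        intro h
        have h2 := congrArg
          (MvPolynomial.eval (fun i : Fin (k+2) => if (i:ℕ) = k+1 then (1:ℂ) else 0)) h
        simp at h2
      apply mul_right_cancel₀ hXne
      apply MvPolynomial.funext
      intro s
      rw [map_mul, map_mul, map_sub, MvPolynomial.eval_X, MvPolynomial.eval_X, hQ']
      have hEk : ∀ t : Fin (k+1) → ℂ, MvPolynomial.eval (Fin.cases u₀ t) (Q k)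
          = (-1:ℂ)^k * DpFun p k (List.ofFn t) := by
        intro t
        rw [← hQ' k t, ihk, map_mul, map_pow, map_neg, map_one, eval_Dmv]
      have hrec' := hrec k (Fin.cases u₀ s)
      have eA : Fin.cases (motive := fun _ => ℂ) u₀ s ⟨k+2, by omega⟩
          = s ⟨k+1, by omega⟩ := rfl
      have eB : Fin.cases (motive := fun _ => ℂ) u₀ s ⟨k+1, by omega⟩
          = s ⟨k, by omega⟩ := rfl
      have eC : (fun i : Fin (k+2) => Fin.cases (motive := fun _ => ℂ) u₀ s i.castSucc)
          = Fin.cases (motive := fun _ => ℂ) u₀ (fun j : Fin (k+1) => s j.castSucc) := by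
        funext i
        induction i using Fin.cases with
        | zero => rfl
        | succ j => rfl
      have eD : (fun i : Fin (k+2) => if (i:ℕ) = k+1 then s ⟨k+1, by omega⟩
            else Fin.cases (motive := fun _ => ℂ) u₀ s i.castSucc)
          = Fin.cases (motive := fun _ => ℂ) u₀
              (fun j : Fin (k+1) => if (j:ℕ) = k then s ⟨k+1, by omega⟩ else s j.castSucc) := by
        funext i
        induction i using Fin.cases with
        | zero => rfl
        | succ j =>
          by_cases h : (j:ℕ) = k
          · rw [if_pos (by simp [h]), Fin.cases_succ, if_pos h]
          · rw [if_neg (by simp [h]), Fin.cases_succ, if_neg h]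
            rfl
      rw [eA, eB] at hrec'
      rw [eC, eD, hEk, hEk] at hrec'
      set l : List ℂ := List.ofFn (fun j : Fin k => s j.castSucc.castSucc) with hl
      have hL1 : List.ofFn (fun j : Fin (k+1) => s j.castSucc) = l ++ [s ⟨k, by omega⟩] := by
        rw [List.ofFn_succ', List.concat_eq_append]
        rfl
      have hL2 : List.ofFn (fun j : Fin (k+1) =>
            if (j:ℕ) = k then s ⟨k+1, by omega⟩ else s j.castSucc)
          = l ++ [s ⟨k+1, by omega⟩] := by
        rw [List.ofFn_succ', List.concat_eq_append]
        congr 1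
        · rw [hl]
          congr 1
          funext j
          rw [if_neg (by have := j.isLt; simp only [Fin.coe_castSucc]; omega)]
        · rw [if_pos (by simp)]
      have hL3 : List.ofFn s = l ++ [s ⟨k, by omega⟩, s ⟨k+1, by omega⟩] := by
        rw [List.ofFn_succ', List.concat_eq_append, hL1, List.append_assoc]
        rfl
      rw [hL1, hL2] at hrec'
      rw [map_mul, map_pow, map_neg, map_one, eval_Dmv, hL3]
      have hdiff := DpFun_diff p k l (s ⟨k, by omega⟩) (s ⟨k+1, by omega⟩)
      linear_combination hrec' + ((-1:ℂ)^k) * hdiff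
  have keyE : ∀ (k : ℕ) (t : Fin (k+1) → ℂ),
      MvPolynomial.eval (Fin.cases u₀ t) (Q k) = (-1:ℂ)^k * DpFun p k (List.ofFn t) := by
    intro k t
    rw [← hQ' k t, key k, map_mul, map_pow, map_neg, map_one, eval_Dmv]
  have hsys_eq : ∀ (k : ℕ) (hk : k < d),
      MvPolynomial.eval (fun i : Fin (k+2) =>
        if (i:ℕ) = 0 then u₀ else x ⟨(i:ℕ)-1, by have := i.isLt; omega⟩) (Q k)
      = (-1:ℂ)^k * DpFun p k
          (List.ofFn (fun j : Fin (k+1) => x ⟨(j:ℕ), by have := j.isLt; omega⟩)) := by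
    intro k hk
    have hpt : (fun i : Fin (k+2) =>
          if (i:ℕ) = 0 then u₀ else x ⟨(i:ℕ)-1, by have := i.isLt; omega⟩)
        = Fin.cases (motive := fun _ => ℂ) u₀
            (fun j : Fin (k+1) => x ⟨(j:ℕ), by have := j.isLt; omega⟩) := by
      funext i
      induction i using Fin.cases with
      | zero => rfl
      | succ j =>
        rw [Fin.cases_succ, if_neg (by simp)]
        exact congrArg x (Fin.ext (by simp))
    rw [hpt]
    exact keyE k _
  constructor
  · intro hsys
    have hDz : ∀ (k : ℕ) (hk : k < d),
        DpFun p k (List.ofFn (fun j : Fin (k+1) => x ⟨(j:ℕ), by have := j.isLt; omega⟩))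
          = 0 := by
      intro k hk
      have h := hsys k hk
      rw [hsys_eq k hk] at h
      exact (mul_eq_zero.mp h).resolve_left (pow_ne_zero _ (by norm_num))
    have build : ∀ k : ℕ, (hkd : k ≤ d) → ∃ f : Fin k → Fin d,
        Function.Injective f ∧ ∀ j : Fin k, x ⟨(j:ℕ), by omega⟩ = u (f j) := by
      intro k
      induction k with
      | zero => exact fun _ => ⟨Fin.elim0, fun a => a.elim0, fun j => j.elim0⟩
      | succ k ih =>
        intro hk1
        obtain ⟨f, hfinj, hfx⟩ := ih (by omega)
        have hk : k < d := hk1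
        have h0 := hDz k hk
        have hL : List.ofFn (fun j : Fin (k+1) => x ⟨(j:ℕ), by have := j.isLt; omega⟩)
            = List.ofFn (fun j : Fin k => u (f j)) ++ [x ⟨k, by omega⟩] := by
          rw [List.ofFn_succ', List.concat_eq_append]
          congr 1
          congr 1
          funext j
          exact hfx j
        replace h0 := (congrArg (DpFun p k) hL).symm.trans h0
        replace h0 := (congrArg (fun q => DpFun q k
          (List.ofFn (fun j : Fin k => u (f j)) ++ [x ⟨(k:ℕ), by omega⟩])) hq_univ).trans h0
        have hch := chain k Finset.univ f hfinj (fun j => Finset.mem_univ _)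
          [x ⟨(k:ℕ), by omega⟩]
        replace h0 := hch.symm.trans h0
        rw [DpFun_eval] at h0
        obtain ⟨i0, hi0S, hi0⟩ := (hq_zero _ _).mp h0
        have hi0nim : ∀ j : Fin k, f j ≠ i0 := by
          have := (Finset.mem_sdiff.mp hi0S).2
          simp only [Finset.mem_image, Finset.mem_univ, true_and, not_exists] at this
          exact fun j h => this j h
        refine ⟨fun j => if h : (j:ℕ) < k then f ⟨(j:ℕ), h⟩ else i0, ?_, ?_⟩
        · intro a b hab
          dsimp only at hab
          by_cases ha : (a:ℕ) < k <;> by_cases hb : (b:ℕ) < k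
          · rw [dif_pos ha, dif_pos hb] at hab
            have := hfinj hab
            exact Fin.ext (by simpa [Fin.ext_iff] using this)
          · rw [dif_pos ha, dif_neg hb] at hab
            exact absurd hab (hi0nim _)
          · rw [dif_neg ha, dif_pos hb] at hab
            exact absurd hab.symm (hi0nim _)
          · have := a.isLt; have := b.isLt
            exact Fin.ext (by omega)
        · intro j
          dsimp only
          by_cases h : (j:ℕ) < k
          · rw [dif_pos h]
            exact hfx ⟨(j:ℕ), h⟩
          · rw [dif_neg h]
            have hjk : (j:ℕ) = k := by have := j.isLt; omega
            exact (congrArg x (Fin.ext hjk)).trans hi0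
    obtain ⟨f, hfinj, hfx⟩ := build d le_rfl
    have hbij : Function.Bijective f := Finite.injective_iff_bijective.mp hfinj
    refine ⟨Equiv.ofBijective f hbij, fun i => ?_⟩
    have h := hfx i
    have : (⟨(i:ℕ), by omega⟩ : Fin d) = i := Fin.ext rfl
    rw [this] at h
    exact h
  · rintro ⟨σ, hσ⟩ k hk
    rw [hsys_eq k hk]
    have hDz : DpFun p k
        (List.ofFn (fun j : Fin (k+1) => x ⟨(j:ℕ), by have := j.isLt; omega⟩)) = 0 := by
      set f : Fin k → Fin d := fun j => σ ⟨(j:ℕ), by have := j.isLt; omega⟩ with hf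
      have hfinj : Function.Injective f := by
        intro a b hab
        have := σ.injective hab
        exact Fin.ext (by simpa [Fin.ext_iff] using this)
      have hL : List.ofFn (fun j : Fin (k+1) => x ⟨(j:ℕ), by have := j.isLt; omega⟩)
          = List.ofFn (fun j : Fin k => u (f j)) ++ [x ⟨k, by omega⟩] := by
        rw [List.ofFn_succ', List.concat_eq_append]
        congr 1
        congr 1
        funext j
        exact hσ ⟨(j:ℕ), by have := j.isLt; omega⟩
      have hch := chain k Finset.univ f hfinj (fun j => Finset.mem_univ _)
        [x ⟨(k:ℕ), hk⟩]
      refine (congrArg (DpFun p k) hL).trans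
        (((congrArg (fun q => DpFun q k
          (List.ofFn (fun j : Fin k => u (f j)) ++ [x ⟨(k:ℕ), hk⟩])) hq_univ).symm.trans
          (hch.trans ?_)))
      rw [DpFun_eval]
      apply (hq_zero _ _).mpr
      refine ⟨σ ⟨k, hk⟩, Finset.mem_sdiff.mpr ⟨Finset.mem_univ _, ?_⟩, ?_⟩
      · simp only [Finset.mem_image, Finset.mem_univ, true_and, not_exists]
        intro j hj
        have := σ.injective hj
        have := congrArg Fin.val this
        simp at this
        omega
      · exact hσ ⟨k, hk⟩
    rw [hDz, mul_zero]
end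

section
/- Let a₀₀, a₁₀, a₁₁, a₂₀, a₂₁, a₂₂ ∈ ℂ satisfy a₀₀a₂₂ + a₂₀a₁₁ − a₂₀² − a₂₁a₁₀ = 0, and let Φ(x,y) = a₀₀ + a₁₀(x+y) + a₁₁xy + a₂₀(x²+y²) + a₂₁xy(x+y) + a₂₂x²y². If u, v, w ∈ ℂ satisfy a₂₂u² + a₂₁u + a₂₀ ≠ 0, v ≠ w, Φ(u,v) = 0 and Φ(u,w) = 0, then Φ(v,w) = 0. -/
theorem stmt_8 (a00 a10 a11 a20 a21 a22 : ℂ)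
    (hΔ : a00 * a22 + a20 * a11 - a20 ^ 2 - a21 * a10 = 0)
    (Φ : ℂ → ℂ → ℂ)
    (hΦ : ∀ x y, Φ x y = a00 + a10 * (x + y) + a11 * x * y + a20 * (x ^ 2 + y ^ 2)
      + a21 * x * y * (x + y) + a22 * x ^ 2 * y ^ 2)
    (u v w : ℂ) (ha : a22 * u ^ 2 + a21 * u + a20 ≠ 0) (hvw : v ≠ w)
    (huv : Φ u v = 0) (huw : Φ u w = 0) :
    Φ v w = 0 := by
  rw [hΦ] at huv huw ⊢
  have hne : v - w ≠ 0 := sub_ne_zero.mpr hvw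
  have hs : (a22 * u ^ 2 + a21 * u + a20) * (v + w) + (a21 * u ^ 2 + a11 * u + a10) = 0 := by
    have h : (v - w) * ((a22 * u ^ 2 + a21 * u + a20) * (v + w)
        + (a21 * u ^ 2 + a11 * u + a10)) = 0 := by linear_combination huv - huw
    rcases mul_eq_zero.mp h with h | h
    · exact absurd h hne
    · exact h
  have hp : (a22 * u ^ 2 + a21 * u + a20) * (v * w) - (a20 * u ^ 2 + a10 * u + a00) = 0 := by
    have h : (v - w) * ((a22 * u ^ 2 + a21 * u + a20) * (v * w)
        - (a20 * u ^ 2 + a10 * u + a00)) = 0 := by linear_combination w * huv - v * huw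
    rcases mul_eq_zero.mp h with h | h
    · exact absurd h hne
    · exact h
  have hE : (a22 * u ^ 2 + a21 * u + a20) ^ 2 * (a00 + a10 * (v + w) + a11 * v * w
      + a20 * (v ^ 2 + w ^ 2) + a21 * v * w * (v + w) + a22 * v ^ 2 * w ^ 2) = 0 := by
    linear_combination
      (a10 * (a22 * u ^ 2 + a21 * u + a20)
        + a20 * ((a22 * u ^ 2 + a21 * u + a20) * (v + w) + (a21 * u ^ 2 + a11 * u + a10))
        - 2 * a20 * (a21 * u ^ 2 + a11 * u + a10)
        + a21 * ((a22 * u ^ 2 + a21 * u + a20) * (v * w) - (a20 * u ^ 2 + a10 * u + a00))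
        + a21 * (a20 * u ^ 2 + a10 * u + a00)) * hs
      + (a11 * (a22 * u ^ 2 + a21 * u + a20) - 2 * a20 * (a22 * u ^ 2 + a21 * u + a20)
        - a21 * (a21 * u ^ 2 + a11 * u + a10)
        + a22 * ((a22 * u ^ 2 + a21 * u + a20) * (v * w) - (a20 * u ^ 2 + a10 * u + a00))
        + 2 * a22 * (a20 * u ^ 2 + a10 * u + a00)) * hp
      + (a22 * u ^ 4 + 2 * a21 * u ^ 3 + (2 * a20 + a11) * u ^ 2 + 2 * a10 * u + a00) * hΔ
  rcases mul_eq_zero.mp hE with h | h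
  · exact absurd (pow_eq_zero_iff two_ne_zero |>.mp h) ha
  · exact h
end

section
/- Let Φ(x,y) = x²y² + x² + y² − xy + 2. For all u, v, w ∈ ℂ, if Φ(u,v) = 0, Φ(u,w) = 0 and v ≠ w, then Φ(v,w) = 0. -/
theorem stmt_9 (Φ : ℂ → ℂ → ℂ)
    (hΦ : ∀ x y, Φ x y = x ^ 2 * y ^ 2 + x ^ 2 + y ^ 2 - x * y + 2)
    (u v w : ℂ) (huv : Φ u v = 0) (huw : Φ u w = 0) (hvw : v ≠ w) :
    Φ v w = 0 := by
  rw [hΦ] at huv huw ⊢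
  have hd : v - w ≠ 0 := sub_ne_zero.mpr hvw
  have h0 : u ^ 2 + 1 ≠ 0 := by
    intro h
    have hu2 : u ^ 2 = -1 := by linear_combination h
    have hv1 : u * v = 1 := by linear_combination (-1 : ℂ) * huv + (v ^ 2 + 1) * hu2
    have hw1 : u * w = 1 := by linear_combination (-1 : ℂ) * huw + (w ^ 2 + 1) * hu2
    have hu : u ≠ 0 := by
      intro hu0
      rw [hu0, zero_mul] at hv1
      exact zero_ne_one hv1
    exact hvw (mul_left_cancel₀ hu (hv1.trans hw1.symm))
  have hB : (u ^ 2 + 1) * (v + w) = u := by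
    apply mul_left_cancel₀ hd
    linear_combination huv - huw
  have hA : (u ^ 2 + 1) * (v * w) = u ^ 2 + 2 := by
    apply mul_left_cancel₀ hd
    linear_combination w * huv - v * huw
  have key : (u ^ 2 + 1) ^ 2 * (v ^ 2 * w ^ 2 + v ^ 2 + w ^ 2 - v * w + 2) = 0 := by
    linear_combination ((u ^ 2 + 1) * (v * w) + (u ^ 2 + 2) - 3 * (u ^ 2 + 1)) * hA +
      ((u ^ 2 + 1) * (v + w) + u) * hB
  exact (mul_eq_zero.mp key).resolve_left (pow_ne_zero 2 h0)
end

section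
/- Let a₀₀, a₁₀, a₁₁, a₂₀, a₂₁, a₂₂ ∈ ℂ satisfy a₂₂a₁₁a₀₀ − a₂₂a₁₀² − a₁₁a₂₀² + 2a₂₁a₂₀a₁₀ − a₂₁²a₀₀ = 0, and let Φ(x,y) = a₀₀ + a₁₀(x+y) + a₁₁xy + a₂₀(x²+y²) + a₂₁xy(x+y) + a₂₂x²y². Write a(x) = a₂₂x² + a₂₁x + a₂₀ and b(x) = a₂₁x² + a₁₁x + a₁₀. Suppose u₁, u₂, u₃, u₄ ∈ ℂ satisfy: Φ(u₁,u₂) = 0, Φ(u₂,u₃) = 0, Φ(u₃,u₄) = 0, a(u₂) ≠ 0, a(u₃) ≠ 0, u₁ ≠ u₃, u₂ ≠ u₄, a(u₂)(u₁ + u₃) = −b(u₂), and a(u₃)(u₂ + u₄) = −b(u₃). Then Φ(u₄,u₁) = 0. -/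
theorem stmt_10 (a00 a10 a11 a20 a21 a22 : ℂ)
    (hΔ : a22 * a11 * a00 - a22 * a10 ^ 2 - a11 * a20 ^ 2
      + 2 * a21 * a20 * a10 - a21 ^ 2 * a00 = 0)
    (Φ : ℂ → ℂ → ℂ)
    (hΦ : ∀ x y, Φ x y = a00 + a10 * (x + y) + a11 * x * y + a20 * (x ^ 2 + y ^ 2)
      + a21 * x * y * (x + y) + a22 * x ^ 2 * y ^ 2)
    (a b : ℂ → ℂ)
    (ha : ∀ x, a x = a22 * x ^ 2 + a21 * x + a20)
    (hb : ∀ x, b x = a21 * x ^ 2 + a11 * x + a10)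
    (u₁ u₂ u₃ u₄ : ℂ)
    (h12 : Φ u₁ u₂ = 0) (h23 : Φ u₂ u₃ = 0) (h34 : Φ u₃ u₄ = 0)
    (ha2 : a u₂ ≠ 0) (ha3 : a u₃ ≠ 0) (h13 : u₁ ≠ u₃) (h24 : u₂ ≠ u₄)
    (hv2 : a u₂ * (u₁ + u₃) = -(b u₂)) (hv3 : a u₃ * (u₂ + u₄) = -(b u₃)) :
    Φ u₄ u₁ = 0 := by
  rw [hΦ] at h23
  rw [ha, hb] at hv2 hv3
  have key : a u₂ ^ 2 * a u₃ ^ 2 * Φ u₄ u₁ = 0 := by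
    rw [ha u₂, ha u₃, hΦ]
    linear_combination ((u₁*u₄^2*u₃^4*u₂^2*a22^4 + u₁*u₄^2*u₃^4*u₂*a22^3*a21 + u₁*u₄^2*u₃^4*a22^3*a20 + (2)*u₁*u₄^2*u₃^3*u₂^2*a22^3*a21 + (2)*u₁*u₄^2*u₃^3*u₂*a22^2*a21^2 + (2)*u₁*u₄^2*u₃^3*a22^2*a21*a20 + (2)*u₁*u₄^2*u₃^2*u₂^2*a22^3*a20 + u₁*u₄^2*u₃^2*u₂^2*a22^2*a21^2 + (2)*u₁*u₄^2*u₃^2*u₂*a22^2*a21*a20 + u₁*u₄^2*u₃^2*u₂*a22*a21^3 + (2)*u₁*u₄^2*u₃^2*a22^2*a20^2 + u₁*u₄^2*u₃^2*a22*a21^2*a20 + (2)*u₁*u₄^2*u₃*u₂^2*a22^2*a21*a20 + (2)*u₁*u₄^2*u₃*u₂*a22*a21^2*a20 + (2)*u₁*u₄^2*u₃*a22*a21*a20^2 + u₁*u₄^2*u₂^2*a22^2*a20^2 + u₁*u₄^2*u₂*a22*a21*a20^2 + u₁*u₄^2*a22*a20^3 + u₁*u₄*u₃^4*u₂^2*a22^3*a21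 + u₁*u₄*u₃^4*u₂*a22^2*a21^2 + u₁*u₄*u₃^4*a22^2*a21*a20 + (2)*u₁*u₄*u₃^3*u₂^2*a22^2*a21^2 + (2)*u₁*u₄*u₃^3*u₂*a22*a21^3 + (2)*u₁*u₄*u₃^3*a22*a21^2*a20 + (2)*u₁*u₄*u₃^2*u₂^2*a22^2*a21*a20 + u₁*u₄*u₃^2*u₂^2*a22*a21^3 + (2)*u₁*u₄*u₃^2*u₂*a22*a21^2*a20 + u₁*u₄*u₃^2*u₂*a21^4 + (2)*u₁*u₄*u₃^2*a22*a21*a20^2 + u₁*u₄*u₃^2*a21^3*a20 + (2)*u₁*u₄*u₃*u₂^2*a22*a21^2*a20 + (2)*u₁*u₄*u₃*u₂*a21^3*a20 + (2)*u₁*u₄*u₃*a21^2*a20^2 + u₁*u₄*u₂^2*a22*a21*a20^2 + u₁*u₄*u₂*a21^2*a20^2 + u₁*u₄*a21*a20^3 + u₁*u₃^4*u₂^2*a22^3*a20 + u₁*u₃^4*u₂*a22^2*a21*a20 + u₁*u₃^4*a22^2*a20^2 + (2)*u₁*u₃^3*u₂^2*a22^2*a21*a20 + (2)*u₁*u₃^3*u₂*a22*a21^2*a20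 + (2)*u₁*u₃^3*a22*a21*a20^2 + (2)*u₁*u₃^2*u₂^2*a22^2*a20^2 + u₁*u₃^2*u₂^2*a22*a21^2*a20 + (2)*u₁*u₃^2*u₂*a22*a21*a20^2 + u₁*u₃^2*u₂*a21^3*a20 + (2)*u₁*u₃^2*a22*a20^3 + u₁*u₃^2*a21^2*a20^2 + (2)*u₁*u₃*u₂^2*a22*a21*a20^2 + (2)*u₁*u₃*u₂*a21^2*a20^2 + (2)*u₁*u₃*a21*a20^3 + u₁*u₂^2*a22*a20^3 + u₁*u₂*a21*a20^3 + u₁*a20^4 + (-1)*u₄^2*u₃^5*u₂^2*a22^4 + (-1)*u₄^2*u₃^5*u₂*a22^3*a21 + (-1)*u₄^2*u₃^5*a22^3*a20 + (-2)*u₄^2*u₃^4*u₂^2*a22^3*a21 + (-1)*u₄^2*u₃^4*u₂*a22^3*a11 + (-1)*u₄^2*u₃^4*u₂*a22^2*a21^2 + (-1)*u₄^2*u₃^4*a22^3*a10 + (-1)*u₄^2*u₃^4*a22^2*a21*a20 + (-2)*u₄^2*u₃^3*u₂^2*a22^3*a20 + (-1)*u₄^2*u₃^3*u₂^2*a22^2*a21^2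 + (-2)*u₄^2*u₃^3*u₂*a22^2*a21*a20 + (-2)*u₄^2*u₃^3*u₂*a22^2*a21*a11 + u₄^2*u₃^3*u₂*a22*a21^3 + (-2)*u₄^2*u₃^3*a22^2*a21*a10 + (-2)*u₄^2*u₃^3*a22^2*a20^2 + u₄^2*u₃^3*a22*a21^2*a20 + (-2)*u₄^2*u₃^2*u₂^2*a22^2*a21*a20 + (-2)*u₄^2*u₃^2*u₂*a22^2*a20*a11 + (-1)*u₄^2*u₃^2*u₂*a22*a21^2*a11 + u₄^2*u₃^2*u₂*a21^4 + (-2)*u₄^2*u₃^2*a22^2*a20*a10 + (-1)*u₄^2*u₃^2*a22*a21^2*a10 + u₄^2*u₃^2*a21^3*a20 + (-1)*u₄^2*u₃*u₂^2*a22^2*a20^2 + (-1)*u₄^2*u₃*u₂*a22*a21*a20^2 + (-2)*u₄^2*u₃*u₂*a22*a21*a20*a11 + (2)*u₄^2*u₃*u₂*a21^3*a20 + (-2)*u₄^2*u₃*a22*a21*a20*a10 + (-1)*u₄^2*u₃*a22*a20^3 + (2)*u₄^2*u₃*a21^2*a20^2 + (-1)*u₄^2*u₂*a22*a20^2*a11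 + u₄^2*u₂*a21^2*a20^2 + (-1)*u₄^2*a22*a20^2*a10 + u₄^2*a21*a20^3 + (-1)*u₄*u₃^5*u₂^2*a22^3*a21 + (-1)*u₄*u₃^5*u₂*a22^2*a21^2 + (-1)*u₄*u₃^5*a22^2*a21*a20 + u₄*u₃^4*u₂^2*a22^3*a11 + (-3)*u₄*u₃^4*u₂^2*a22^2*a21^2 + (-2)*u₄*u₃^4*u₂*a22*a21^3 + (-1)*u₄*u₃^4*a22^2*a21*a10 + u₄*u₃^4*a22^2*a20*a11 + (-2)*u₄*u₃^4*a22*a21^2*a20 + (-2)*u₄*u₃^3*u₂^2*a22^2*a21*a20 + (2)*u₄*u₃^3*u₂^2*a22^2*a21*a11 + (-3)*u₄*u₃^3*u₂^2*a22*a21^3 + (-2)*u₄*u₃^3*u₂*a22*a21^2*a20 + (-1)*u₄*u₃^3*u₂*a21^4 + (-2)*u₄*u₃^3*a22*a21^2*a10 + (-2)*u₄*u₃^3*a22*a21*a20^2 + (2)*u₄*u₃^3*a22*a21*a20*a11 + (-1)*u₄*u₃^3*a21^3*a20 + (2)*u₄*u₃^2*u₂^2*a22^2*a20*a11 + (-4)*u₄*u₃^2*u₂^2*a22*a21^2*a20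 + u₄*u₃^2*u₂^2*a22*a21^2*a11 + (-1)*u₄*u₃^2*u₂^2*a21^4 + (-2)*u₄*u₃^2*u₂*a21^3*a20 + (-2)*u₄*u₃^2*a22*a21*a20*a10 + (2)*u₄*u₃^2*a22*a20^2*a11 + (-1)*u₄*u₃^2*a21^3*a10 + (-2)*u₄*u₃^2*a21^2*a20^2 + u₄*u₃^2*a21^2*a20*a11 + (-1)*u₄*u₃*u₂^2*a22*a21*a20^2 + (2)*u₄*u₃*u₂^2*a22*a21*a20*a11 + (-2)*u₄*u₃*u₂^2*a21^3*a20 + (-1)*u₄*u₃*u₂*a21^2*a20^2 + (-2)*u₄*u₃*a21^2*a20*a10 + (-1)*u₄*u₃*a21*a20^3 + (2)*u₄*u₃*a21*a20^2*a11 + u₄*u₂^2*a22*a20^2*a11 + (-1)*u₄*u₂^2*a21^2*a20^2 + (-1)*u₄*a21*a20^2*a10 + u₄*a20^3*a11 + (-1)*u₃^5*u₂^2*a22^3*a20 + (-1)*u₃^5*u₂*a22^2*a21*a20 + (-1)*u₃^5*a22^2*a20^2 + u₃^4*u₂^2*a22^3*a10 + (-3)*u₃^4*u₂^2*a22^2*a21*a20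 + u₃^4*u₂*a22^2*a21*a10 + (-1)*u₃^4*u₂*a22^2*a20*a11 + (-2)*u₃^4*u₂*a22*a21^2*a20 + (-2)*u₃^4*a22*a21*a20^2 + (2)*u₃^3*u₂^2*a22^2*a21*a10 + (-2)*u₃^3*u₂^2*a22^2*a20^2 + (-3)*u₃^3*u₂^2*a22*a21^2*a20 + (2)*u₃^3*u₂*a22*a21^2*a10 + (-2)*u₃^3*u₂*a22*a21*a20^2 + (-2)*u₃^3*u₂*a22*a21*a20*a11 + (-1)*u₃^3*u₂*a21^3*a20 + (-2)*u₃^3*a22*a20^3 + (-1)*u₃^3*a21^2*a20^2 + (2)*u₃^2*u₂^2*a22^2*a20*a10 + u₃^2*u₂^2*a22*a21^2*a10 + (-4)*u₃^2*u₂^2*a22*a21*a20^2 + (-1)*u₃^2*u₂^2*a21^3*a20 + (2)*u₃^2*u₂*a22*a21*a20*a10 + (-2)*u₃^2*u₂*a22*a20^2*a11 + u₃^2*u₂*a21^3*a10 + (-2)*u₃^2*u₂*a21^2*a20^2 + (-1)*u₃^2*u₂*a21^2*a20*a11 + (-2)*u₃^2*a21*a20^3 + (2)*u₃*u₂^2*a22*a21*a20*a10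 + (-1)*u₃*u₂^2*a22*a20^3 + (-2)*u₃*u₂^2*a21^2*a20^2 + (2)*u₃*u₂*a21^2*a20*a10 + (-1)*u₃*u₂*a21*a20^3 + (-2)*u₃*u₂*a21*a20^2*a11 + (-1)*u₃*a20^4 + u₂^2*a22*a20^2*a10 + (-1)*u₂^2*a21*a20^3 + u₂*a21*a20^2*a10 + (-1)*u₂*a20^3*a11)) * hv2 + ((u₄*u₃^4*u₂^4*a22^4 + (2)*u₄*u₃^4*u₂^3*a22^3*a21 + (2)*u₄*u₃^4*u₂^2*a22^3*a20 + u₄*u₃^4*u₂^2*a22^2*a21^2 + (2)*u₄*u₃^4*u₂*a22^2*a21*a20 + u₄*u₃^4*a22^2*a20^2 + (2)*u₄*u₃^3*u₂^4*a22^3*a21 + (2)*u₄*u₃^3*u₂^3*a22^3*a11 + (2)*u₄*u₃^3*u₂^3*a22^2*a21^2 + (2)*u₄*u₃^3*u₂^2*a22^3*a10 + (2)*u₄*u₃^3*u₂^2*a22^2*a21*a20 + (2)*u₄*u₃^3*u₂^2*a22^2*a21*a11 + (2)*u₄*u₃^3*u₂*a22^2*a21*a10 + (2)*u₄*u₃^3*u₂*a22^2*a20*a11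 + (2)*u₄*u₃^3*a22^2*a20*a10 + (2)*u₄*u₃^2*u₂^4*a22^3*a20 + u₄*u₃^2*u₂^4*a22^2*a21^2 + (4)*u₄*u₃^2*u₂^3*a22^2*a21*a20 + (3)*u₄*u₃^2*u₂^3*a22^2*a21*a11 + (-1)*u₄*u₃^2*u₂^3*a22*a21^3 + (3)*u₄*u₃^2*u₂^2*a22^2*a21*a10 + (4)*u₄*u₃^2*u₂^2*a22^2*a20^2 + u₄*u₃^2*u₂^2*a22^2*a11^2 + u₄*u₃^2*u₂^2*a22*a21^2*a20 + u₄*u₃^2*u₂^2*a22*a21^2*a11 + (-1)*u₄*u₃^2*u₂^2*a21^4 + (2)*u₄*u₃^2*u₂*a22^2*a11*a10 + u₄*u₃^2*u₂*a22*a21^2*a10 + (4)*u₄*u₃^2*u₂*a22*a21*a20^2 + u₄*u₃^2*u₂*a22*a21*a20*a11 + (-2)*u₄*u₃^2*u₂*a21^3*a20 + u₄*u₃^2*a22^2*a10^2 + u₄*u₃^2*a22*a21*a20*a10 + (2)*u₄*u₃^2*a22*a20^3 + (-1)*u₄*u₃^2*a21^2*a20^2 + (2)*u₄*u₃*u₂^4*a22^2*a21*a20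 + (2)*u₄*u₃*u₂^3*a22^2*a20*a11 + (2)*u₄*u₃*u₂^3*a22*a21^2*a20 + u₄*u₃*u₂^3*a22*a21^2*a11 + (-1)*u₄*u₃*u₂^3*a21^4 + (2)*u₄*u₃*u₂^2*a22^2*a20*a10 + u₄*u₃*u₂^2*a22*a21^2*a10 + (2)*u₄*u₃*u₂^2*a22*a21*a20^2 + (2)*u₄*u₃*u₂^2*a22*a21*a20*a11 + u₄*u₃*u₂^2*a22*a21*a11^2 + (-1)*u₄*u₃*u₂^2*a21^3*a20 + (-1)*u₄*u₃*u₂^2*a21^3*a11 + (2)*u₄*u₃*u₂*a22*a21*a20*a10 + (2)*u₄*u₃*u₂*a22*a21*a11*a10 + (2)*u₄*u₃*u₂*a22*a20^2*a11 + (-1)*u₄*u₃*u₂*a21^3*a10 + (-1)*u₄*u₃*u₂*a21^2*a20*a11 + u₄*u₃*a22*a21*a10^2 + (2)*u₄*u₃*a22*a20^2*a10 + (-1)*u₄*u₃*a21^2*a20*a10 + u₄*u₂^4*a22^2*a20^2 + (2)*u₄*u₂^3*a22*a21*a20^2 + u₄*u₂^3*a22*a21*a20*a11 + (-1)*u₄*u₂^3*a21^3*a20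 + u₄*u₂^2*a22*a21*a20*a10 + (2)*u₄*u₂^2*a22*a20^3 + u₄*u₂^2*a22*a20*a11^2 + (-1)*u₄*u₂^2*a21^2*a20*a11 + (2)*u₄*u₂*a22*a20*a11*a10 + (-1)*u₄*u₂*a21^2*a20*a10 + (2)*u₄*u₂*a21*a20^3 + (-1)*u₄*u₂*a21*a20^2*a11 + u₄*a22*a20*a10^2 + (-1)*u₄*a21*a20^2*a10 + u₄*a20^4 + (-1)*u₃^4*u₂^5*a22^4 + (-2)*u₃^4*u₂^4*a22^3*a21 + (-2)*u₃^4*u₂^3*a22^3*a20 + (-1)*u₃^4*u₂^3*a22^2*a21^2 + (-2)*u₃^4*u₂^2*a22^2*a21*a20 + (-1)*u₃^4*u₂*a22^2*a20^2 + (-2)*u₃^3*u₂^5*a22^3*a21 + (-4)*u₃^3*u₂^4*a22^3*a11 + (-2)*u₃^3*u₂^3*a22^3*a10 + (-2)*u₃^3*u₂^3*a22^2*a21*a20 + (-6)*u₃^3*u₂^3*a22^2*a21*a11 + (4)*u₃^3*u₂^3*a22*a21^3 + (-2)*u₃^3*u₂^2*a22^2*a21*a10 + (-6)*u₃^3*u₂^2*a22^2*a20*a11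 + (4)*u₃^3*u₂^2*a22*a21^2*a20 + (-2)*u₃^3*u₂^2*a22*a21^2*a11 + (2)*u₃^3*u₂^2*a21^4 + (-2)*u₃^3*u₂*a22^2*a20*a10 + (-4)*u₃^3*u₂*a22*a21*a20*a11 + (4)*u₃^3*u₂*a21^3*a20 + (-2)*u₃^3*a22*a20^2*a11 + (2)*u₃^3*a21^2*a20^2 + (-2)*u₃^2*u₂^5*a22^3*a20 + (-1)*u₃^2*u₂^5*a22^2*a21^2 + (-4)*u₃^2*u₂^4*a22^2*a21*a20 + (-6)*u₃^2*u₂^4*a22^2*a21*a11 + (4)*u₃^2*u₂^4*a22*a21^3 + (-3)*u₃^2*u₂^3*a22^2*a21*a10 + (-4)*u₃^2*u₂^3*a22^2*a20^2 + (-4)*u₃^2*u₂^3*a22^2*a11^2 + (-1)*u₃^2*u₂^3*a22*a21^2*a20 + (-1)*u₃^2*u₂^3*a22*a21^2*a11 + (4)*u₃^2*u₂^3*a21^4 + (-5)*u₃^2*u₂^2*a22^2*a11*a10 + (2)*u₃^2*u₂^2*a22*a21^2*a10 + (-4)*u₃^2*u₂^2*a22*a21*a20^2 + (-4)*u₃^2*u₂^2*a22*a21*a20*a11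 + (-3)*u₃^2*u₂^2*a22*a21*a11^2 + (5)*u₃^2*u₂^2*a21^3*a20 + (3)*u₃^2*u₂^2*a21^3*a11 + (-1)*u₃^2*u₂*a22^2*a10^2 + (-1)*u₃^2*u₂*a22*a21*a20*a10 + (-3)*u₃^2*u₂*a22*a21*a11*a10 + (-2)*u₃^2*u₂*a22*a20^3 + (-3)*u₃^2*u₂*a22*a20*a11^2 + (3)*u₃^2*u₂*a21^3*a10 + u₃^2*u₂*a21^2*a20^2 + (3)*u₃^2*u₂*a21^2*a20*a11 + (-3)*u₃^2*a22*a20*a11*a10 + (3)*u₃^2*a21^2*a20*a10 + (-2)*u₃*u₂^5*a22^2*a21*a20 + (-4)*u₃*u₂^4*a22^2*a20*a11 + (-2)*u₃*u₂^4*a22*a21^2*a11 + (2)*u₃*u₂^4*a21^4 + (-2)*u₃*u₂^3*a22^2*a20*a10 + (-2)*u₃*u₂^3*a22^2*a11*a10 + u₃*u₂^3*a22*a21^2*a10 + (-2)*u₃*u₂^3*a22*a21*a20^2 + (-4)*u₃*u₂^3*a22*a21*a20*a11 + (-3)*u₃*u₂^3*a22*a21*a11^2 + (3)*u₃*u₂^3*a21^3*a20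 + (3)*u₃*u₂^3*a21^3*a11 + (-2)*u₃*u₂^2*a22^2*a10^2 + (2)*u₃*u₂^2*a22*a21*a20*a10 + (-6)*u₃*u₂^2*a22*a21*a11*a10 + (-6)*u₃*u₂^2*a22*a20^2*a11 + (-1)*u₃*u₂^2*a22*a11^3 + (5)*u₃*u₂^2*a21^3*a10 + (2)*u₃*u₂^2*a21^2*a20^2 + u₃*u₂^2*a21^2*a20*a11 + u₃*u₂^2*a21^2*a11^2 + (-3)*u₃*u₂*a22*a21*a10^2 + (-2)*u₃*u₂*a22*a20^2*a10 + (-2)*u₃*u₂*a22*a20*a11*a10 + (-2)*u₃*u₂*a22*a11^2*a10 + (7)*u₃*u₂*a21^2*a20*a10 + (2)*u₃*u₂*a21^2*a11*a10 + (-2)*u₃*u₂*a21*a20^2*a11 + (-2)*u₃*a22*a20*a10^2 + (-1)*u₃*a22*a11*a10^2 + u₃*a21^2*a10^2 + (4)*u₃*a21*a20^2*a10 + (-2)*u₃*a20^3*a11 + (-1)*u₂^5*a22^2*a20^2 + (-2)*u₂^4*a22*a21*a20^2 + (-2)*u₂^4*a22*a21*a20*a11 + (2)*u₂^4*a21^3*a20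 + (-1)*u₂^3*a22*a21*a20*a10 + (-1)*u₂^3*a22*a21*a11*a10 + (-2)*u₂^3*a22*a20^3 + (-2)*u₂^3*a22*a20*a11^2 + u₂^3*a21^3*a10 + (2)*u₂^3*a21^2*a20*a11 + (-1)*u₂^2*a22*a21*a10^2 + (-3)*u₂^2*a22*a20*a11*a10 + (-1)*u₂^2*a22*a11^2*a10 + (4)*u₂^2*a21^2*a20*a10 + u₂^2*a21^2*a11*a10 + (-2)*u₂^2*a21*a20^3 + (-1)*u₂*a22*a20*a10^2 + (-2)*u₂*a22*a11*a10^2 + u₂*a21^2*a10^2 + u₂*a21*a20^2*a10 + (2)*u₂*a21*a20*a11*a10 + (-1)*u₂*a20^4 + (-1)*u₂*a20^2*a11^2 + (-1)*a22*a10^3 + (2)*a21*a20*a10^2 + (-1)*a20^2*a11*a10)) * hv3 + ((u₃^4*u₂^4*a22^4 + (2)*u₃^4*u₂^3*a22^3*a21 + (2)*u₃^4*u₂^2*a22^3*a20 + u₃^4*u₂^2*a22^2*a21^2 + (2)*u₃^4*u₂*a22^2*a21*a20 + u₃^4*a22^2*a20^2 + (2)*u₃^3*u₂^4*a22^3*a21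 + (4)*u₃^3*u₂^3*a22^3*a11 + (4)*u₃^3*u₂^2*a22^2*a21*a20 + (6)*u₃^3*u₂^2*a22^2*a21*a11 + (-4)*u₃^3*u₂^2*a22*a21^3 + (4)*u₃^3*u₂*a22^2*a20*a11 + (2)*u₃^3*u₂*a22*a21^2*a11 + (-2)*u₃^3*u₂*a21^4 + (2)*u₃^3*a22*a21*a20^2 + (2)*u₃^3*a22*a21*a20*a11 + (-2)*u₃^3*a21^3*a20 + (2)*u₃^2*u₂^4*a22^3*a20 + u₃^2*u₂^4*a22^2*a21^2 + (4)*u₃^2*u₂^3*a22^2*a21*a20 + (6)*u₃^2*u₂^3*a22^2*a21*a11 + (-4)*u₃^2*u₂^3*a22*a21^3 + (4)*u₃^2*u₂^2*a22^2*a20^2 + (4)*u₃^2*u₂^2*a22^2*a11^2 + (4)*u₃^2*u₂^2*a22*a21^2*a20 + u₃^2*u₂^2*a22*a21^2*a11 + (-4)*u₃^2*u₂^2*a21^4 + (2)*u₃^2*u₂*a22^2*a11*a10 + (-2)*u₃^2*u₂*a22*a21^2*a10 + (4)*u₃^2*u₂*a22*a21*a20^2 + (4)*u₃^2*u₂*a22*a21*a20*a11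 + (3)*u₃^2*u₂*a22*a21*a11^2 + (-2)*u₃^2*u₂*a21^3*a20 + (-3)*u₃^2*u₂*a21^3*a11 + u₃^2*a22*a21*a11*a10 + (2)*u₃^2*a22*a20^3 + (2)*u₃^2*a22*a20*a11^2 + (-1)*u₃^2*a21^3*a10 + u₃^2*a21^2*a20^2 + (-2)*u₃^2*a21^2*a20*a11 + (2)*u₃*u₂^4*a22^2*a21*a20 + (4)*u₃*u₂^3*a22^2*a20*a11 + (2)*u₃*u₂^3*a22*a21^2*a11 + (-2)*u₃*u₂^3*a21^4 + (2)*u₃*u₂^2*a22^2*a11*a10 + (-2)*u₃*u₂^2*a22*a21^2*a10 + (4)*u₃*u₂^2*a22*a21*a20^2 + (4)*u₃*u₂^2*a22*a21*a20*a11 + (3)*u₃*u₂^2*a22*a21*a11^2 + (-2)*u₃*u₂^2*a21^3*a20 + (-3)*u₃*u₂^2*a21^3*a11 + (-4)*u₃*u₂*a22^2*a11*a00 + (4)*u₃*u₂*a22^2*a10^2 + (4)*u₃*u₂*a22*a21^2*a00 + (-8)*u₃*u₂*a22*a21*a20*a10 + (4)*u₃*u₂*a22*a21*a11*a10 + (8)*u₃*u₂*a22*a20^2*a11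 + u₃*u₂*a22*a11^3 + (-4)*u₃*u₂*a21^3*a10 + (-1)*u₃*u₂*a21^2*a11^2 + (-2)*u₃*a22*a21*a11*a00 + (2)*u₃*a22*a21*a10^2 + (2)*u₃*a22*a20*a11*a10 + u₃*a22*a11^2*a10 + (2)*u₃*a21^3*a00 + (-6)*u₃*a21^2*a20*a10 + (-1)*u₃*a21^2*a11*a10 + (2)*u₃*a21*a20^3 + (2)*u₃*a21*a20^2*a11 + u₂^4*a22^2*a20^2 + (2)*u₂^3*a22*a21*a20^2 + (2)*u₂^3*a22*a21*a20*a11 + (-2)*u₂^3*a21^3*a20 + u₂^2*a22*a21*a11*a10 + (2)*u₂^2*a22*a20^3 + (2)*u₂^2*a22*a20*a11^2 + (-1)*u₂^2*a21^3*a10 + u₂^2*a21^2*a20^2 + (-2)*u₂^2*a21^2*a20*a11 + (-2)*u₂*a22*a21*a11*a00 + (2)*u₂*a22*a21*a10^2 + (2)*u₂*a22*a20*a11*a10 + u₂*a22*a11^2*a10 + (2)*u₂*a21^3*a00 + (-6)*u₂*a21^2*a20*a10 + (-1)*u₂*a21^2*a11*a10 + (2)*u₂*a21*a20^3 + (2)*u₂*a21*a20^2*a11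 + a22*a11*a10^2 + (-1)*a21^2*a10^2 + a20^4)) * h23 + (((-1)*u₃^2*u₂^2*a21^2 + (2)*u₃^2*u₂*a22*a10 + (-2)*u₃^2*u₂*a21*a20 + (-1)*u₃^2*u₂*a21*a11 + u₃^2*a21*a10 + (-2)*u₃^2*a20*a11 + (2)*u₃*u₂^2*a22*a10 + (-2)*u₃*u₂^2*a21*a20 + (-1)*u₃*u₂^2*a21*a11 + (4)*u₃*u₂*a22*a00 + (-4)*u₃*u₂*a20^2 + (-1)*u₃*u₂*a11^2 + (2)*u₃*a21*a00 + (-2)*u₃*a20*a10 + (-1)*u₃*a11*a10 + u₂^2*a21*a10 + (-2)*u₂^2*a20*a11 + (2)*u₂*a21*a00 + (-2)*u₂*a20*a10 + (-1)*u₂*a11*a10 + (-1)*a10^2)) * hΔ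
  exact (mul_eq_zero.mp key).resolve_left
    (mul_ne_zero (pow_ne_zero 2 ha2) (pow_ne_zero 2 ha3))
end

section
/- Let Φ(x,y) = x²y² + x² + y² + 3x + 3y + 1. For all u, v, w ∈ ℂ, if Φ(u,v) = 0, Φ(u,w) = 0 and v ≠ w, then Φ(v,w) = 0. -/
theorem stmt_12 (Φ : ℂ → ℂ → ℂ)
    (hΦ : ∀ x y, Φ x y = x ^ 2 * y ^ 2 + x ^ 2 + y ^ 2 + 3 * x + 3 * y + 1)
    (u v w : ℂ) (huv : Φ u v = 0) (huw : Φ u w = 0) (hvw : v ≠ w) :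
    Φ v w = 0 := by
  rw [hΦ] at huv huw ⊢
  have hvw' : v - w ≠ 0 := sub_ne_zero.mpr hvw
  have hA : (u ^ 2 + 1) * (v + w) + 3 = 0 := by
    have h1 : (v - w) * ((u ^ 2 + 1) * (v + w) + 3) = 0 := by linear_combination huv - huw
    rcases mul_eq_zero.mp h1 with h | h
    · exact absurd h hvw'
    · exact h
  have hB : (u ^ 2 + 1) * (v * w) - (u ^ 2 + 3 * u + 1) = 0 := by
    have h2 : (v - w) * ((u ^ 2 + 1) * (v * w) - (u ^ 2 + 3 * u + 1)) = 0 := by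
      linear_combination w * huv - v * huw
    rcases mul_eq_zero.mp h2 with h | h
    · exact absurd h hvw'
    · exact h
  have ht : (u ^ 2 + 1) ≠ 0 := by
    intro h
    rw [h] at hA
    simp at hA
  have key : (v ^ 2 * w ^ 2 + v ^ 2 + w ^ 2 + 3 * v + 3 * w + 1) * (u ^ 2 + 1) ^ 2 = 0 := by
    linear_combination ((u ^ 2 + 1) * (v * w) + (u ^ 2 + 3 * u + 1) - 2 * (u ^ 2 + 1)) * hB +
      ((u ^ 2 + 1) * (v + w) - 3 + 3 * (u ^ 2 + 1)) * hA
  rcases mul_eq_zero.mp key with h | h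
  · exact h
  · exact absurd (pow_eq_zero_iff (by norm_num) |>.mp h) ht
end
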